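/- arXiv:2107.04570 — 5 statements merged into one kernel-verified Lean document; each statement's English description precedes it below -/
import Mathlib

section
/- Let ‖·‖ be a norm on ℝⁿ, let L > 0, and let g : ℝⁿ → ℝ^K be a function such that each component g^i (i = 1,…,K) is L-Lipschitz with respect to ‖·‖, i.e., |g^i(x) − g^i(y)| ≤ L‖x − y‖ for all x, y. Fix x ∈ ℝⁿ and let c_A be an index maximizing g^i(x) over i. Then for every δ ∈ ℝⁿ satisfying ‖δ‖ ≤ (1/(2L)) · (g^{c_A}(x) − max_{c ≠ c_A} g^c(x)), one has g^{c_A}(x + δ) ≥ g^c(x + δ) for every c ≠ c_A; that is, c_A remains a maximizing index at x + δ. -/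
/-- For a vector-valued function with `L`-Lipschitz components
(w.r.t. an arbitrary norm `Nrm`), the top class `cA` at `x` is preserved for
any perturbation `δ` with `Nrm δ ≤ (1/(2L)) (g^{cA}(x) - max_{c ≠ cA} g^c(x))`. -/
theorem lipschitz_classifier_certificate (n K : ℕ)
    (Nrm : (Fin n → ℝ) → ℝ)
    (h_add : ∀ x y, Nrm (x + y) ≤ Nrm x + Nrm y)
    (h_smul : ∀ (c : ℝ) (x), Nrm (c • x) = |c| * Nrm x)
    (h_def : ∀ x, Nrm x = 0 ↔ x = 0)
    (g : (Fin n → ℝ) → Fin K → ℝ) (L : ℝ) (hL : 0 < L)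
    (hlip : ∀ i x y, |g x i - g y i| ≤ L * Nrm (x - y))
    (x : Fin n → ℝ) (cA : Fin K) (hcA : ∀ i, g x i ≤ g x cA)
    (hne : (Finset.univ.erase cA).Nonempty)
    (δ : Fin n → ℝ)
    (hδ : Nrm δ ≤ (1 / (2 * L)) *
      (g x cA - (Finset.univ.erase cA).sup' hne (fun c => g x c))) :
    ∀ c, c ≠ cA → g (x + δ) c ≤ g (x + δ) cA := by
  intro c hc
  set M := (Finset.univ.erase cA).sup' hne (fun c => g x c) with hM
  have hd : x + δ - x = δ := by ring
  have h1 : g (x + δ) c - g x c ≤ L * Nrm δ := by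
    have := hlip c (x + δ) x; rw [hd] at this
    exact (abs_le.mp this).2
  have h2 : g x cA - g (x + δ) cA ≤ L * Nrm δ := by
    have := hlip cA (x + δ) x; rw [hd] at this
    linarith [(abs_le.mp this).1]
  have hcM : g x c ≤ M :=
    Finset.le_sup' _ (Finset.mem_erase.mpr ⟨hc, Finset.mem_univ c⟩)
  have hLδ : L * Nrm δ ≤ (g x cA - M) / 2 := by
    have := mul_le_mul_of_nonneg_left hδ hL.le
    calc L * Nrm δ ≤ L * ((1 / (2 * L)) * (g x cA - M)) := this
      _ = (g x cA - M) / 2 := by field_simp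
  linarith
end

section
/- Let Σ ∈ ℝ^{n×n} be positive definite and let f : ℝⁿ → [0,1] be measurable. Define the smoothed function g_Σ(x) = E_{ε ~ N(0,Σ)}[f(x + ε)], and assume f is neither almost everywhere 0 nor almost everywhere 1, so that 0 < g_Σ(x) < 1 for all x. Then the map x ↦ Φ⁻¹(g_Σ(x)) is 1-Lipschitz with respect to the norm ‖δ‖_{Σ,2} = √(δᵀΣ⁻¹δ); that is, |Φ⁻¹(g_Σ(x)) − Φ⁻¹(g_Σ(y))| ≤ √((x − y)ᵀΣ⁻¹(x − y)) for all x, y ∈ ℝⁿ. -/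
/-!
Write `Σ = A Aᵀ`. Then `g_Σ(z) = 𝔼 f(z + A W)` with `W` a standard Gaussian vector, and for
`x = y + A c` the Cameron–Martin formula gives `g_Σ(x) = 𝔼[G(W) exp(⟨c, W⟩ - |c|²/2)]`, where
`G(w) = f(y + A w)` has `𝔼 G(W) = g_Σ(y) =: Φ(a)`. The likelihood ratio `exp(⟨c, w⟩ - |c|²/2)` is
a decreasing function of `⟨u, w⟩` for the unit vector `u = -c/|c|`, so by the Neyman–Pearson
argument the expectation is largest when `G` is the indicator of the half-space `⟨u, w⟩ ≤ a`;
since `⟨u, W⟩` is standard normal this maximum is `Φ(a + |c|)`, and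
`|c|² = (x - y)ᵀ Σ⁻¹ (x - y)`.
-/

open MeasureTheory Matrix

/-- Density of the centered Gaussian `N(0, Σ)` on ℝⁿ (w.r.t. Lebesgue measure). -/
noncomputable def gaussDensity (n : ℕ) (Sig : Matrix (Fin n) (Fin n) ℝ)
    (ε : Fin n → ℝ) : ℝ :=
  (Real.sqrt ((2 * Real.pi) ^ n * Sig.det))⁻¹ * Real.exp (-(ε ⬝ᵥ (Sig⁻¹ *ᵥ ε)) / 2)

/-- Standard Gaussian cumulative distribution function Φ on ℝ. -/
noncomputable def stdGaussianCDF (x : ℝ) : ℝ :=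
  (ProbabilityTheory.gaussianReal 0 1 (Set.Iic x)).toReal

open ProbabilityTheory Real Set
open scoped MatrixOrder

local notation "γ" => Measure.pi fun _ => gaussianReal 0 1

lemma stdGaussianCDF_strictMono : StrictMono stdGaussianCDF := by
  intro u v huv
  have hpos : 0 < (gaussianReal 0 1).real (Ioc u v) := by
    refine ENNReal.toReal_pos (fun h => ?_) (measure_ne_top _ _)
    have := gaussianReal_absolutelyContinuous' 0 one_ne_zero h
    simp only [Real.volume_Ioc, ENNReal.ofReal_eq_zero, tsub_le_iff_right, zero_add] at this
    linarith
  have hsplit := measureReal_union (μ := gaussianReal 0 1) (Iic_disjoint_Ioc (le_refl u))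
    (measurableSet_Ioc (b := v))
  rw [Iic_union_Ioc_eq_Iic huv.le] at hsplit
  simp only [stdGaussianCDF, ← measureReal_def]
  linarith

lemma setIntegral_Iic_exp_gaussianReal (a d : ℝ) :
    ∫ s in Iic a, exp (-(d * s) - d ^ 2 / 2) ∂gaussianReal 0 1 = stdGaussianCDF (a + d) := by
  have htilt : ∀ s, gaussianPDFReal 0 1 s * exp (-(d * s) - d ^ 2 / 2) =
      gaussianPDFReal (-d) 1 s := by
    intro s
    simp only [gaussianPDFReal, NNReal.coe_one, mul_one, sub_zero, sub_neg_eq_add]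
    rw [mul_assoc, ← Real.exp_add]
    ring_nf
  have hshift : (gaussianReal 0 1).map (· + -d) = gaussianReal (-d) 1 := by
    simpa using gaussianReal_map_add_const (μ := 0) (v := 1) (-d)
  calc ∫ s in Iic a, exp (-(d * s) - d ^ 2 / 2) ∂gaussianReal 0 1
      = ∫ s in Iic a, gaussianPDFReal (-d) 1 s := by
        rw [← integral_indicator measurableSet_Iic, ← integral_indicator measurableSet_Iic,
          integral_gaussianReal_eq_integral_smul one_ne_zero]
        congr 1 with s
        by_cases hs : s ∈ Iic a <;> simp [hs, htilt]
    _ = (gaussianReal (-d) 1).real (Iic a) := by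
        rw [measureReal_def, gaussianReal_apply_eq_integral _ one_ne_zero,
          ENNReal.toReal_ofReal (setIntegral_nonneg measurableSet_Iic fun s _ =>
            gaussianPDFReal_nonneg _ _ s)]
    _ = stdGaussianCDF (a + d) := by
        rw [← hshift, map_measureReal_apply (measurable_add_const _) measurableSet_Iic,
          stdGaussianCDF, measureReal_def]
        congr 2
        ext s
        simp

lemma integral_mul_le_setIntegral_of_threshold {α : Type*} [MeasurableSpace α] {μ : Measure α}
    [IsFiniteMeasure μ] {G E : α → ℝ} {H : Set α} {k : ℝ} (hH : MeasurableSet H)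
    (hGm : AEStronglyMeasurable G μ) (hG : ∀ x, G x ∈ Icc 0 1) (hE : Integrable E μ)
    (hk : 0 ≤ k) (hEH : ∀ x ∈ H, k ≤ E x) (hEHc : ∀ x ∉ H, E x ≤ k)
    (hGH : ∫ x, G x ∂μ ≤ μ.real H) :
    ∫ x, G x * E x ∂μ ≤ ∫ x in H, E x ∂μ := by
  have hGbdd : ∀ᵐ x ∂μ, ‖G x‖ ≤ 1 := ae_of_all _ fun x => by
    rw [Real.norm_eq_abs, abs_of_nonneg (hG x).1]; exact (hG x).2
  have hGint : Integrable G μ := (integrable_const 1).mono' hGm hGbdd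
  have hHint : Integrable (H.indicator (1 : α → ℝ)) μ := (integrable_const 1).indicator hH
  have hdiff : Integrable (fun x => k * (G x - H.indicator 1 x)) μ :=
    (hGint.sub hHint).const_mul k
  -- `(G - 1_H) (E - k) ≤ 0` pointwise: `E - k` changes sign exactly across the boundary of `H`
  have hpt : ∀ x, G x * E x ≤ H.indicator E x + k * (G x - H.indicator 1 x) := by
    intro x
    by_cases hx : x ∈ H
    · simp only [indicator_of_mem hx, Pi.one_apply]
      nlinarith [hEH x hx, (hG x).2]
    · simp only [indicator_of_notMem hx]
      nlinarith [hEHc x hx, (hG x).1]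
  calc ∫ x, G x * E x ∂μ
      ≤ ∫ x, (H.indicator E x + k * (G x - H.indicator 1 x)) ∂μ :=
        integral_mono (hE.bdd_mul hGm hGbdd) ((hE.indicator hH).add hdiff) hpt
    _ = ∫ x in H, E x ∂μ + k * (∫ x, G x ∂μ - μ.real H) := by
        rw [integral_add (hE.indicator hH) hdiff, integral_const_mul, integral_sub hGint hHint,
          integral_indicator hH, integral_indicator_one hH]
    _ ≤ ∫ x in H, E x ∂μ := by
        nlinarith [mul_nonneg hk (sub_nonneg.mpr hGH)]

section StandardGaussianVector

variable {ι : Type*} [Fintype ι]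

lemma pi_gaussianReal_eq_withDensity :
    (γ : Measure (ι → ℝ)) =
      volume.withDensity fun w => ENNReal.ofReal (∏ i, gaussianPDFReal 0 1 (w i)) := by
  refine Measure.pi_eq fun s hs => ?_
  rw [withDensity_apply _ (MeasurableSet.univ_pi hs), ← ofReal_integral_eq_lintegral_ofReal,
    volume_pi, Measure.restrict_pi_pi, integral_fintype_prod_eq_prod,
    ENNReal.ofReal_prod_of_nonneg]
  · exact Finset.prod_congr rfl fun i _ => (gaussianReal_apply_eq_integral _ one_ne_zero _).symm
  · exact fun i _ => setIntegral_nonneg (hs i) fun s _ => gaussianPDFReal_nonneg _ _ s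
  · exact (Integrable.fintype_prod fun _ => integrable_gaussianPDFReal 0 1).integrableOn
  · exact ae_of_all _ fun w => Finset.prod_nonneg fun i _ => gaussianPDFReal_nonneg _ _ _

lemma integral_pi_gaussianReal (ψ : (ι → ℝ) → ℝ) :
    ∫ w, ψ w ∂γ = ∫ w, (∏ i, gaussianPDFReal 0 1 (w i)) * ψ w := by
  rw [pi_gaussianReal_eq_withDensity, integral_withDensity_eq_integral_toReal_smul (by fun_prop)
    (ae_of_all _ fun _ => ENNReal.ofReal_lt_top)]
  simp_rw [ENNReal.toReal_ofReal (Finset.prod_nonneg fun i _ => gaussianPDFReal_nonneg _ _ _),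
    smul_eq_mul]

lemma integral_comp_add_pi_gaussianReal (ψ : (ι → ℝ) → ℝ) (c : ι → ℝ) :
    ∫ w, ψ (w + c) ∂γ = ∫ w, exp (c ⬝ᵥ w - c ⬝ᵥ c / 2) * ψ w ∂γ := by
  have hshift : ∀ s t, gaussianPDFReal 0 1 (s - t) =
      exp (t * s - t * t / 2) * gaussianPDFReal 0 1 s := by
    intro s t
    simp only [gaussianPDFReal, NNReal.coe_one, mul_one, sub_zero]
    rw [mul_left_comm, ← Real.exp_add]
    ring_nf
  rw [integral_pi_gaussianReal, integral_pi_gaussianReal, ← integral_sub_right_eq_self _ c]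
  congr 1 with w
  simp only [Pi.sub_apply, sub_add_cancel, hshift, Finset.prod_mul_distrib, ← Real.exp_sum,
    dotProduct, Finset.sum_sub_distrib, Finset.sum_div]
  ring

lemma map_dotProduct_pi_gaussianReal (u : ι → ℝ) :
    (γ : Measure (ι → ℝ)).map (u ⬝ᵥ ·) = gaussianReal 0 (u ⬝ᵥ u).toNNReal := by
  have h : (u ⬝ᵥ ·) = innerSL ℝ (WithLp.toLp 2 u) ∘ WithLp.toLp 2 := by
    ext w; simp [dotProduct, PiLp.inner_apply, mul_comm]
  rw [h, ← Measure.map_map (by fun_prop) (by fun_prop), map_pi_eq_stdGaussian,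
    IsGaussian.map_eq_gaussianReal, integral_strongDual_stdGaussian, variance_dual_stdGaussian,
    innerSL_apply_norm, EuclideanSpace.real_norm_sq_eq]
  simp [dotProduct, sq]

theorem integral_comp_add_pi_gaussianReal_le_stdGaussianCDF {G : (ι → ℝ) → ℝ}
    (hGm : Measurable G) (hG : ∀ w, G w ∈ Icc 0 1) (c : ι → ℝ) {a : ℝ}
    (ha : ∫ w, G w ∂γ = stdGaussianCDF a) :
    ∫ w, G (w + c) ∂γ ≤ stdGaussianCDF (a + √(c ⬝ᵥ c)) := by
  rcases eq_or_ne c 0 with rfl | hc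
  · simp [ha]
  have hcc : 0 < c ⬝ᵥ c := lt_of_le_of_ne' (Finset.sum_nonneg fun i _ => mul_self_nonneg (c i))
    (dotProduct_self_eq_zero.not.mpr hc)
  set d := √(c ⬝ᵥ c)
  have hd : 0 < d := Real.sqrt_pos.mpr hcc
  have hd2 : c ⬝ᵥ c = d ^ 2 := (Real.sq_sqrt hcc.le).symm
  set u : ι → ℝ := -d⁻¹ • c
  have huu : u ⬝ᵥ u = 1 := by
    simp only [u, smul_dotProduct, dotProduct_smul, smul_eq_mul, hd2]
    field_simp
  set e : ℝ → ℝ := fun s => exp (-(d * s) - d ^ 2 / 2)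
  have he : Antitone e := fun s t hst => exp_le_exp.mpr (by nlinarith)
  have hratio : ∀ w, exp (c ⬝ᵥ w - c ⬝ᵥ c / 2) = e (u ⬝ᵥ w) := by
    intro w
    simp only [e, u, smul_dotProduct, smul_eq_mul, hd2]
    field_simp
  have hlaw : (γ : Measure (ι → ℝ)).map (u ⬝ᵥ ·) = gaussianReal 0 1 := by
    simp [map_dotProduct_pi_gaussianReal, huu]
  have hL : Measurable (u ⬝ᵥ · : (ι → ℝ) → ℝ) := by fun_prop
  have heint : Integrable (fun w => e (u ⬝ᵥ w)) γ := by
    have h : Integrable e ((γ : Measure (ι → ℝ)).map (u ⬝ᵥ ·)) := by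
      rw [hlaw]
      refine ((integrable_exp_mul_gaussianReal (-d)).mul_const (exp (-(d ^ 2 / 2)))).congr
        (ae_of_all _ fun s => ?_)
      simp only [e, ← Real.exp_add]
      ring_nf
    exact (integrable_map_measure h.aestronglyMeasurable hL.aemeasurable).mp h
  rw [integral_comp_add_pi_gaussianReal]
  simp_rw [hratio, mul_comm (e _)]
  calc ∫ w, G w * e (u ⬝ᵥ w) ∂γ
      ≤ ∫ w in (u ⬝ᵥ ·) ⁻¹' Iic a, e (u ⬝ᵥ w) ∂γ := by
        refine integral_mul_le_setIntegral_of_threshold (hL measurableSet_Iic)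
          hGm.aestronglyMeasurable hG heint (exp_pos _).le (fun w hw => he hw)
          (fun w hw => he (not_le.mp hw).le) ?_
        rw [ha, ← map_measureReal_apply hL measurableSet_Iic, hlaw]
        rfl
    _ = ∫ s in Iic a, e s ∂gaussianReal 0 1 := by
        have h := setIntegral_map (μ := γ) (f := e) (measurableSet_Iic (a := a))
          (by fun_prop) hL.aemeasurable
        rw [hlaw] at h
        exact h.symm
    _ = stdGaussianCDF (a + d) := setIntegral_Iic_exp_gaussianReal a d

end StandardGaussianVector

lemma Matrix.PosDef.exists_mul_transpose_eq {m : Type*} [Fintype m] [DecidableEq m]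
    {Sig : Matrix m m ℝ} (hSig : Sig.PosDef) : ∃ A : Matrix m m ℝ, A * Aᵀ = Sig ∧ IsUnit A.det := by
  have hsymm : (CFC.sqrt Sig)ᵀ = CFC.sqrt Sig := by
    simpa [conjTranspose_eq_transpose_of_trivial] using
      (nonneg_iff_posSemidef.mp (CFC.sqrt_nonneg Sig)).isHermitian.eq
  have hsq : CFC.sqrt Sig * (CFC.sqrt Sig)ᵀ = Sig := by
    rw [hsymm, CFC.sqrt_mul_sqrt_self Sig hSig.posSemidef.nonneg]
  refine ⟨CFC.sqrt Sig, hsq, isUnit_iff_ne_zero.mpr fun h => hSig.det_pos.ne' ?_⟩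
  rw [← hsq, det_mul, h, zero_mul]

lemma dotProduct_inv_mulVec_mulVec {m : Type*} [Fintype m] [DecidableEq m]
    {Sig A : Matrix m m ℝ} (hAA : A * Aᵀ = Sig) (hA : IsUnit A.det) (w : m → ℝ) :
    (A *ᵥ w) ⬝ᵥ (Sig⁻¹ *ᵥ (A *ᵥ w)) = w ⬝ᵥ w := by
  rw [← hAA, Matrix.mul_inv_rev, mulVec_mulVec, Matrix.mul_assoc, nonsing_inv_mul A hA,
    Matrix.mul_one, dotProduct_mulVec, vecMul_mulVec, ← transpose_nonsing_inv, ← transpose_mul,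
    nonsing_inv_mul A hA, transpose_one, vecMul_one]

lemma abs_det_mul_gaussDensity_mulVec {n : ℕ} {Sig A : Matrix (Fin n) (Fin n) ℝ}
    (hAA : A * Aᵀ = Sig) (hA : IsUnit A.det) (w : Fin n → ℝ) :
    |A.det| * gaussDensity n Sig (A *ᵥ w) = ∏ i, gaussianPDFReal 0 1 (w i) := by
  have hdet : Sig.det = A.det ^ 2 := by rw [← hAA, det_mul, det_transpose, sq]
  have hsqrt : √((2 * π) ^ n) = √(2 * π) ^ n := by
    rw [Real.sqrt_eq_iff_mul_self_eq (by positivity) (by positivity), ← mul_pow,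
      Real.mul_self_sqrt (by positivity)]
  simp only [gaussDensity, gaussianPDFReal, NNReal.coe_one, mul_one, sub_zero,
    dotProduct_inv_mulVec_mulVec hAA hA, Finset.prod_mul_distrib, Finset.prod_const,
    Finset.card_univ, Fintype.card_fin, ← Real.exp_sum, hdet]
  have hsum : -(w ⬝ᵥ w) / 2 = ∑ i, -w i ^ 2 / 2 := by
    simp [dotProduct, sq, Finset.sum_div, neg_div]
  have hA0 : |A.det| ≠ 0 := abs_ne_zero.mpr hA.ne_zero
  rw [Real.sqrt_mul (by positivity), Real.sqrt_sq_eq_abs, hsqrt, inv_pow, hsum]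
  field_simp

lemma integral_comp_mulVec {m : Type*} [Fintype m] [DecidableEq m] {A : Matrix m m ℝ}
    (hA : IsUnit A.det) {g : (m → ℝ) → ℝ} (hg : Measurable g) :
    ∫ w, g (A *ᵥ w) = |A.det|⁻¹ * ∫ ε, g ε := by
  have hmap := Real.map_matrix_volume_pi_eq_smul_volume_pi hA.ne_zero
  rw [← abs_inv, ← ENNReal.toReal_ofReal (abs_nonneg _), ← smul_eq_mul,
    ← integral_smul_measure, ← hmap, integral_map (by fun_prop) hg.aestronglyMeasurable]
  simp [Matrix.toLin'_apply]

lemma integral_mul_gaussDensity {n : ℕ} {Sig A : Matrix (Fin n) (Fin n) ℝ}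
    (hAA : A * Aᵀ = Sig) (hA : IsUnit A.det) {φ : (Fin n → ℝ) → ℝ} (hφ : Measurable φ) :
    ∫ ε, φ ε * gaussDensity n Sig ε = ∫ w, φ (A *ᵥ w) ∂γ := by
  have hdet : |A.det| ≠ 0 := abs_ne_zero.mpr hA.ne_zero
  calc ∫ ε, φ ε * gaussDensity n Sig ε
      = |A.det| * ∫ w, φ (A *ᵥ w) * gaussDensity n Sig (A *ᵥ w) := by
        rw [integral_comp_mulVec (g := fun ε => φ ε * gaussDensity n Sig ε) hA
          (by unfold gaussDensity; fun_prop), mul_inv_cancel_left₀ hdet]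
    _ = ∫ w, φ (A *ᵥ w) ∂γ := by
        rw [integral_pi_gaussianReal, ← integral_const_mul]
        simp_rw [← abs_det_mul_gaussDensity_mulVec hAA hA, mul_assoc, mul_comm (φ _)]

/-- `x ↦ Φ⁻¹(g_Σ(x))` is 1-Lipschitz w.r.t. `‖δ‖_{Σ,2} = √(δᵀΣ⁻¹δ)`. -/
theorem probit_gaussian_smoothing_lipschitz (n : ℕ)
    (Sig : Matrix (Fin n) (Fin n) ℝ) (hSig : Sig.PosDef)
    (f : (Fin n → ℝ) → ℝ) (hf : Measurable f) (hf01 : ∀ v, f v ∈ Set.Icc (0:ℝ) 1)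
    (gS : (Fin n → ℝ) → ℝ)
    (hgS : ∀ x, gS x = ∫ ε, f (x + ε) * gaussDensity n Sig ε)
    (hg01 : ∀ x, gS x ∈ Set.Ioo (0:ℝ) 1)
    (Φinv : ℝ → ℝ)
    (hΦinv : ∀ p ∈ Set.Ioo (0:ℝ) 1, stdGaussianCDF (Φinv p) = p) :
    ∀ x y, |Φinv (gS x) - Φinv (gS y)| ≤
      Real.sqrt ((x - y) ⬝ᵥ (Sig⁻¹ *ᵥ (x - y))) := by
  obtain ⟨A, hAA, hA⟩ := hSig.exists_mul_transpose_eq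
  have hg : ∀ z, gS z = ∫ w, f (z + A *ᵥ w) ∂γ := fun z => by
    rw [hgS, integral_mul_gaussDensity hAA hA (by fun_prop)]
  have hle : ∀ x y, Φinv (gS x) ≤ Φinv (gS y) + √((x - y) ⬝ᵥ (Sig⁻¹ *ᵥ (x - y))) := by
    intro x y
    set c := A⁻¹ *ᵥ (x - y)
    have hAc : A *ᵥ c = x - y := by rw [mulVec_mulVec, mul_nonsing_inv A hA, one_mulVec]
    have hx : gS x = ∫ w, f (y + A *ᵥ (w + c)) ∂γ := by
      rw [hg x]
      congr 1 with w
      rw [mulVec_add, hAc]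
      abel_nf
    rw [← stdGaussianCDF_strictMono.le_iff_le, hΦinv _ (hg01 x), ← hAc,
      dotProduct_inv_mulVec_mulVec hAA hA, hx]
    exact integral_comp_add_pi_gaussianReal_le_stdGaussianCDF (G := fun w => f (y + A *ᵥ w))
      (by fun_prop) (fun w => hf01 _) c (by rw [← hg y, hΦinv _ (hg01 y)])
  intro x y
  have hsymm : (y - x) ⬝ᵥ (Sig⁻¹ *ᵥ (y - x)) = (x - y) ⬝ᵥ (Sig⁻¹ *ᵥ (x - y)) := by
    rw [← neg_sub x y, mulVec_neg, neg_dotProduct, dotProduct_neg, neg_neg]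
  rw [abs_sub_le_iff]
  constructor
  · linarith [hle x y]
  · linarith [hsymm ▸ hle y x]
end

section
/- Let Λ = diag(λ₁,…,λₙ) with all λᵢ > 0, and let f : ℝⁿ → [0,1] be measurable. Define the smoothed function g_Λ(x) = E_{ε ~ U[−1,1]ⁿ}[f(x + Λε)], where U[−1,1]ⁿ is the uniform distribution on the cube [−1,1]ⁿ. Then |g_Λ(x) − g_Λ(y)| ≤ (1/2) ‖Λ⁻¹(x − y)‖₁ for all x, y ∈ ℝⁿ; i.e., g_Λ is (1/2)-Lipschitz with respect to the norm ‖δ‖_{Λ,1} := ‖Λ⁻¹δ‖₁. -/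
/-!
Moving `x` by `λᵢ c` in coordinate `i` translates the averaging cube by `c eᵢ`. Since `f` takes
values in `[0, 1]`, its integrals over two sets differ by at most the larger of the volumes of the
two set differences; bounding by the larger rather than by their sum is what yields the factor
`1/2`. For the cube `[-1, 1]ⁿ` and its translate each difference is a slab of volume at most
`2ⁿ⁻¹ |c|`, so the normalised averages differ by at most `|c| / 2`. Changing one coordinate at a
time and the triangle inequality give the `ℓ₁` bound.
-/

open MeasureTheory Set Function

section SetIntegral

variable {α : Type*} [MeasurableSpace α] {μ : Measure α} {g : α → ℝ}

lemma setIntegral_mem_Icc_measureReal (hg01 : ∀ x, g x ∈ Icc 0 1)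
    {s : Set α} (hμs : μ s ≠ ⊤) : ∫ x in s, g x ∂μ ∈ Icc 0 (μ.real s) := by
  have : IsFiniteMeasure (μ.restrict s) := isFiniteMeasure_restrict.mpr hμs
  refine ⟨integral_nonneg fun x => (hg01 x).1, ?_⟩
  calc ∫ x in s, g x ∂μ ≤ ∫ _ in s, (1 : ℝ) ∂μ :=
        integral_mono_of_nonneg (.of_forall fun x => (hg01 x).1) (integrable_const 1)
          (.of_forall fun x => (hg01 x).2)
    _ = μ.real s := by simp

lemma abs_setIntegral_sub_setIntegral_le (hg : AEStronglyMeasurable g μ)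
    (hg01 : ∀ x, g x ∈ Icc 0 1) {s t : Set α} (hs : MeasurableSet s) (ht : MeasurableSet t)
    (hμs : μ s ≠ ⊤) (hμt : μ t ≠ ⊤) :
    |∫ x in s, g x ∂μ - ∫ x in t, g x ∂μ| ≤ max (μ.real (s \ t)) (μ.real (t \ s)) := by
  have hint : ∀ {u}, μ u ≠ ⊤ → IntegrableOn g u μ := fun hμu =>
    Measure.integrableOn_of_bounded hμu hg (M := 1) (.of_forall fun x => by
      rw [Real.norm_of_nonneg (hg01 x).1]; exact (hg01 x).2)
  have hsplit : ∫ x in s, g x ∂μ - ∫ x in t, g x ∂μ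
      = ∫ x in s \ t, g x ∂μ - ∫ x in t \ s, g x ∂μ := by
    rw [← integral_inter_add_sdiff ht (hint hμs), ← integral_inter_add_sdiff hs (hint hμt),
      inter_comm]
    ring
  obtain ⟨h₁, h₁'⟩ :=
    setIntegral_mem_Icc_measureReal hg01 (measure_ne_top_of_subset sdiff_subset hμs)
  obtain ⟨h₂, h₂'⟩ :=
    setIntegral_mem_Icc_measureReal hg01 (measure_ne_top_of_subset sdiff_subset hμt)
  rw [hsplit]
  exact abs_sub_le_of_nonneg_of_le h₁ (h₁'.trans (le_max_left _ _)) h₂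
    (h₂'.trans (le_max_right _ _))

end SetIntegral

lemma volume_Icc_sdiff_preimage_add_const_le (a b c : ℝ) :
    volume (Icc a b \ (· + c) ⁻¹' Icc a b) ≤ ENNReal.ofReal |c| := by
  rw [preimage_add_const_Icc]
  rcases le_total 0 c with hc | hc
  · calc volume (Icc a b \ Icc (a - c) (b - c)) ≤ volume (Ioc (b - c) b) :=
          measure_mono fun x ⟨hx, hx'⟩ => ⟨not_le.mp fun h => hx' ⟨by linarith [hx.1], h⟩, hx.2⟩
      _ = ENNReal.ofReal |c| := by rw [Real.volume_Ioc, abs_of_nonneg hc, sub_sub_cancel]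
  · calc volume (Icc a b \ Icc (a - c) (b - c)) ≤ volume (Ico a (a - c)) :=
          measure_mono fun x ⟨hx, hx'⟩ => ⟨hx.1, not_le.mp fun h => hx' ⟨h, by linarith [hx.2]⟩⟩
      _ = ENNReal.ofReal |c| := by rw [Real.volume_Ico, abs_of_nonpos hc, sub_sub_cancel_left]

def cube (ι : Type*) : Set (ι → ℝ) := univ.pi fun _ => Icc (-1) 1

section Cube

variable {ι : Type*} [DecidableEq ι]

lemma univ_pi_sdiff_preimage_add_single (s : ι → Set ℝ) (i : ι) (c : ℝ) :
    univ.pi s \ (· + Pi.single i c) ⁻¹' univ.pi s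
      = univ.pi (update s i (s i \ (· + c) ⁻¹' s i)) := by
  ext x
  simp only [mem_sdiff, mem_preimage, mem_univ_pi, Pi.add_apply]
  constructor
  · rintro ⟨hx, hx'⟩ j
    rcases eq_or_ne j i with rfl | hj
    · refine update_self j _ s ▸ ⟨hx j, fun hj => hx' fun k => ?_⟩
      rcases eq_or_ne k j with rfl | hk
      · simpa using hj
      · simpa [hk] using hx k
    · simpa [hj] using hx j
  · intro hx
    have hxi : x i ∈ s i \ (· + c) ⁻¹' s i := by simpa using hx i
    refine ⟨fun j => ?_, fun h => hxi.2 (by simpa using h i)⟩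
    rcases eq_or_ne j i with rfl | hj
    · exact hxi.1
    · simpa [hj] using hx j

variable [Fintype ι]

lemma measureReal_cube_sdiff_preimage_add_single_le (i : ι) (c : ℝ) :
    volume.real (cube ι \ (· + Pi.single i c) ⁻¹' cube ι) ≤ 2 ^ (Fintype.card ι - 1) * |c| := by
  refine ENNReal.toReal_le_of_le_ofReal (by positivity) ?_
  have hcompl : ∀ j ∈ ({i}ᶜ : Finset ι),
      volume (update (fun _ => Icc (-1 : ℝ) 1) i (Icc (-1) 1 \ (· + c) ⁻¹' Icc (-1) 1) j)
        = ENNReal.ofReal 2 := fun j hj => by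
    rw [update_of_ne (by simpa using hj), Real.volume_Icc]; norm_num
  rw [cube, univ_pi_sdiff_preimage_add_single, volume_pi_pi, Fintype.prod_eq_mul_prod_compl i,
    update_self, Finset.prod_congr rfl hcompl, Finset.prod_const, Finset.card_compl,
    Finset.card_singleton, mul_comm, ENNReal.ofReal_mul (by positivity),
    ENNReal.ofReal_pow zero_le_two]
  gcongr
  exact volume_Icc_sdiff_preimage_add_const_le _ _ _

lemma abs_setIntegral_cube_add_single_sub_le {h : (ι → ℝ) → ℝ} (hh : Measurable h)
    (hh01 : ∀ x, h x ∈ Icc 0 1) (i : ι) (c : ℝ) :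
    |(∫ ε in cube ι, h (ε + Pi.single i c)) - ∫ ε in cube ι, h ε|
      ≤ 2 ^ (Fintype.card ι - 1) * |c| := by
  set w : ι → ℝ := Pi.single i c
  set C' := (· - w) ⁻¹' cube ι
  have hC : MeasurableSet (cube ι) := .univ_pi fun _ => measurableSet_Icc
  have hC' : MeasurableSet C' := hC.preimage (measurable_sub_const w)
  have hμC : volume (cube ι) ≠ ⊤ := (isCompact_univ_pi fun _ => isCompact_Icc).measure_lt_top.ne
  have hμC' : volume C' ≠ ⊤ := by
    rwa [(measurePreserving_sub_right volume w).measure_preimage hC.nullMeasurableSet]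
  have hshift : (· + w) ⁻¹' C' = cube ι := by ext; simp [C']
  have hshift' : C' = (· + Pi.single i (-c)) ⁻¹' cube ι := by
    ext; simp [C', w, sub_eq_add_neg, Pi.single_neg]
  have htranslate : ∫ ε in cube ι, h (ε + w) = ∫ u in C', h u := by
    rw [← hshift]
    exact (measurePreserving_add_right volume w).setIntegral_preimage_emb
      (measurableEmbedding_addRight w) h C'
  have hdiff : volume.real (C' \ cube ι) = volume.real (cube ι \ (· + w) ⁻¹' cube ι) := by
    rw [← (measurePreserving_add_right volume w).measureReal_preimage
      (hC'.diff hC).nullMeasurableSet, preimage_sdiff, hshift]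
  calc |(∫ ε in cube ι, h (ε + w)) - ∫ ε in cube ι, h ε|
      = |(∫ u in C', h u) - ∫ ε in cube ι, h ε| := by rw [htranslate]
    _ ≤ max (volume.real (C' \ cube ι)) (volume.real (cube ι \ C')) :=
      abs_setIntegral_sub_setIntegral_le hh.aestronglyMeasurable hh01 hC' hC hμC' hμC
    _ ≤ 2 ^ (Fintype.card ι - 1) * |c| := by
      refine max_le (hdiff ▸ measureReal_cube_sdiff_preimage_add_single_le i c) ?_
      rw [hshift', ← abs_neg c]
      exact measureReal_cube_sdiff_preimage_add_single_le i (-c)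

end Cube

lemma dist_le_sum_of_dist_update_le {ι α E : Type*} [Fintype ι] [DecidableEq ι]
    [PseudoMetricSpace E] {G : (ι → α) → E} {d : ι → α → α → ℝ}
    (hG : ∀ a i v, dist (G (update a i v)) (G a) ≤ d i v (a i)) (x y : ι → α) :
    dist (G x) (G y) ≤ ∑ i, d i (x i) (y i) := by
  suffices ∀ s : Finset ι, ∀ y, (∀ i ∉ s, x i = y i) →
      dist (G x) (G y) ≤ ∑ i ∈ s, d i (x i) (y i) from
    this Finset.univ y fun i hi => absurd (Finset.mem_univ i) hi
  intro s
  induction s using Finset.induction_on with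
  | empty =>
    intro y hxy
    simp [funext fun i => hxy i (Finset.notMem_empty i)]
  | insert i s hi ih =>
    intro y hxy
    have hy' : ∀ j ∉ s, x j = update y i (x i) j := fun j hj => by
      rcases eq_or_ne j i with rfl | hji
      · simp
      · simpa [hji] using hxy j (by simp [hji, hj])
    have hsum : ∑ j ∈ s, d j (x j) (update y i (x i) j) = ∑ j ∈ s, d j (x j) (y j) :=
      Finset.sum_congr rfl fun j hj => by rw [update_of_ne (ne_of_mem_of_not_mem hj hi)]
    calc dist (G x) (G y)
        ≤ dist (G x) (G (update y i (x i))) + dist (G (update y i (x i))) (G y) :=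
          dist_triangle _ _ _
      _ ≤ ∑ j ∈ s, d j (x j) (y j) + d i (x i) (y i) := by
          rw [← hsum]; exact add_le_add (ih _ hy') (hG y i (x i))
      _ = ∑ j ∈ insert i s, d j (x j) (y j) := by rw [Finset.sum_insert hi, add_comm]

section Smoothing

variable {ι : Type*} [Fintype ι]

noncomputable def uniformSmoothing (lam : ι → ℝ) (f : (ι → ℝ) → ℝ) (x : ι → ℝ) : ℝ :=
  (2 ^ Fintype.card ι)⁻¹ * ∫ ε in cube ι, f (x + fun i => lam i * ε i)

variable [DecidableEq ι]

lemma dist_uniformSmoothing_update_le {lam : ι → ℝ} (hlam : ∀ i, lam i ≠ 0)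
    {f : (ι → ℝ) → ℝ} (hf : Measurable f) (hf01 : ∀ v, f v ∈ Icc 0 1) (a : ι → ℝ) (i : ι)
    (v : ℝ) :
    dist (uniformSmoothing lam f (update a i v)) (uniformSmoothing lam f a)
      ≤ 1 / 2 * |(v - a i) / lam i| := by
  set c := (v - a i) / lam i
  have hshift : ∀ ε : ι → ℝ, (update a i v + fun j => lam j * ε j)
      = a + fun j => lam j * (ε + Pi.single i c : ι → ℝ) j := fun ε => by
    ext j
    rcases eq_or_ne j i with rfl | hj
    · simp only [Pi.add_apply, update_self, Pi.single_eq_same, c]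
      field_simp [hlam j]
      ring
    · simp [hj]
  have hcard : Fintype.card ι ≠ 0 := (Fintype.card_pos_iff.mpr ⟨i⟩).ne'
  rw [Real.dist_eq, uniformSmoothing, uniformSmoothing, ← mul_sub, abs_mul,
    abs_of_pos (by positivity : (0 : ℝ) < (2 ^ Fintype.card ι)⁻¹)]
  simp_rw [hshift]
  calc _ ≤ (2 ^ Fintype.card ι)⁻¹ * (2 ^ (Fintype.card ι - 1) * |c|) := by
        gcongr
        exact abs_setIntegral_cube_add_single_sub_le (h := fun ε => f (a + fun j => lam j * ε j))
          (hf.comp (by fun_prop)) (fun _ => hf01 _) i c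
    _ = 1 / 2 * |c| := by
        rw [← pow_sub_one_mul hcard]
        field_simp

end Smoothing

/-- the uniform-smoothed function
`g_Λ(x) = E_{ε ~ U[-1,1]ⁿ}[f(x + Λε)]` (with `Λ = diag(λ₁,…,λₙ)`, `λᵢ > 0`)
is `(1/2)`-Lipschitz w.r.t. the norm `‖δ‖_{Λ,1} = ‖Λ⁻¹δ‖₁`. -/
theorem uniform_smoothing_half_lipschitz (n : ℕ)
    (lam : Fin n → ℝ) (hlam : ∀ i, 0 < lam i)
    (f : (Fin n → ℝ) → ℝ) (hf : Measurable f) (hf01 : ∀ v, f v ∈ Set.Icc (0:ℝ) 1)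
    (gL : (Fin n → ℝ) → ℝ)
    (hgL : ∀ x, gL x = ((2 : ℝ) ^ n)⁻¹ *
      ∫ ε in Set.univ.pi (fun _ : Fin n => Set.Icc (-1 : ℝ) 1),
        f (x + fun i => lam i * ε i)) :
    ∀ x y, |gL x - gL y| ≤ (1 / 2) * ∑ i, |(x i - y i) / lam i| := by
  obtain rfl : gL = uniformSmoothing lam f :=
    funext fun x => by rw [hgL, uniformSmoothing, cube, Fintype.card_fin]
  intro x y
  rw [← Real.dist_eq, Finset.mul_sum]
  exact dist_le_sum_of_dist_update_le (d := fun i v w => 1 / 2 * |(v - w) / lam i|)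
    (dist_uniformSmoothing_update_le (fun i => (hlam i).ne') hf hf01) x y
end

section
/- Let Λ = diag(λ₁,…,λₙ) with all λᵢ > 0, and let f : ℝⁿ → ℝ^K be measurable with each component f^i taking values in [0,1]. Define g_Λ^i(x) = E_{ε ~ U[−1,1]ⁿ}[f^i(x + Λε)]. Fix x ∈ ℝⁿ and let c_A be an index maximizing g_Λ^i(x) over i. Then for every δ ∈ ℝⁿ satisfying ‖Λ⁻¹δ‖₁ ≤ g_Λ^{c_A}(x) − max_{c ≠ c_A} g_Λ^c(x), one has g_Λ^{c_A}(x + δ) ≥ g_Λ^c(x + δ) for every c ≠ c_A. -/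
/-!
Writing `η = Λ⁻¹δ`, the smoothed score at `x + δ` is the average of `ε ↦ f (x + Λε)` over the
translate `[-1,1]ⁿ + η` of the cube instead of the cube itself. Since `f` takes values in `[0,1]`,
the two integrals differ by at most the volume of `([-1,1]ⁿ + η) \ [-1,1]ⁿ`, which is covered by
`n` slabs of volumes `|ηᵢ| 2ⁿ⁻¹`. Hence every score moves by at most `‖η‖₁ / 2`, and a gap of
`‖η‖₁` between the top score and the runner-up cannot be closed.
-/

open MeasureTheory Set

theorem measure_pi_diff_pi_le {ι : Type*} [Fintype ι] [DecidableEq ι] {α : ι → Type*}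
    [∀ i, MeasurableSpace (α i)] (μ : ∀ i, Measure (α i)) [∀ i, SigmaFinite (μ i)]
    (s t : ∀ i, Set (α i)) :
    Measure.pi μ (univ.pi s \ univ.pi t) ≤
      ∑ i, μ i (s i \ t i) * ∏ j ∈ Finset.univ.erase i, μ j (s j) := by
  have hcover : univ.pi s \ univ.pi t ⊆ ⋃ i, univ.pi (Function.update s i (s i \ t i)) := by
    rintro y ⟨hys, hyt⟩
    obtain ⟨i, hi⟩ : ∃ i, y i ∉ t i := by simpa [mem_univ_pi] using hyt
    refine mem_iUnion.2 ⟨i, fun j _ => ?_⟩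
    rcases eq_or_ne j i with rfl | hj
    · simpa using ⟨hys j trivial, hi⟩
    · simpa [hj] using hys j trivial
  calc _ ≤ ∑ i, Measure.pi μ (univ.pi (Function.update s i (s i \ t i))) :=
        (measure_mono hcover).trans (measure_iUnion_fintype_le _ _)
    _ = _ := by
        refine Finset.sum_congr rfl fun i _ => ?_
        rw [Measure.pi_pi, ← Finset.mul_prod_erase _ _ (Finset.mem_univ i), Function.update_self]
        congr 1
        exact Finset.prod_congr rfl fun j hj => by
          rw [Function.update_of_ne (Finset.ne_of_mem_erase hj)]

theorem Real.volume_Icc_add_diff_Icc_le (a b t : ℝ) :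
    volume (Icc (a + t) (b + t) \ Icc a b) ≤ ENNReal.ofReal |t| := by
  rcases le_total 0 t with ht | ht
  · calc _ ≤ volume (Ioc b (b + t)) := measure_mono <| by
          rintro y ⟨⟨hay, hyb⟩, hy⟩
          exact ⟨lt_of_not_ge fun h => hy ⟨by linarith, h⟩, hyb⟩
      _ = ENNReal.ofReal |t| := by rw [Real.volume_Ioc, abs_of_nonneg ht, add_sub_cancel_left]
  · calc _ ≤ volume (Ico (a + t) a) := measure_mono <| by
          rintro y ⟨⟨hay, hyb⟩, hy⟩
          exact ⟨hay, lt_of_not_ge fun h => hy ⟨h, by linarith⟩⟩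
      _ = ENNReal.ofReal |t| := by rw [Real.volume_Ico, abs_of_nonpos ht]; ring_nf

theorem Real.volume_pi_Icc_add_diff_Icc_le {ι : Type*} [Fintype ι] [DecidableEq ι]
    {a b : ι → ℝ} (hab : a ≤ b) (t : ι → ℝ) :
    volume (Icc (a + t) (b + t) \ Icc a b) ≤
      ENNReal.ofReal (∑ i, |t i| * ∏ j ∈ Finset.univ.erase i, (b j - a j)) := by
  have hside : ∀ j, 0 ≤ b j - a j := fun j => sub_nonneg.2 (hab j)
  rw [ENNReal.ofReal_sum_of_nonneg fun i _ =>
      mul_nonneg (abs_nonneg _) (Finset.prod_nonneg fun j _ => hside j),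
    ← pi_univ_Icc, ← pi_univ_Icc, volume_pi]
  refine (measure_pi_diff_pi_le _ _ _).trans (Finset.sum_le_sum fun i _ => ?_)
  rw [ENNReal.ofReal_mul (abs_nonneg _), ENNReal.ofReal_prod_of_nonneg fun j _ => hside j]
  gcongr with j
  · exact Real.volume_Icc_add_diff_Icc_le _ _ _
  · rw [Real.volume_Icc, Pi.add_apply, Pi.add_apply, add_sub_add_right_eq_sub]

theorem setIntegral_comp_add_right_le {G : Type*} [MeasurableSpace G] [AddGroup G]
    [MeasurableAdd G] {μ : Measure G} [μ.IsAddRightInvariant] {F : G → ℝ} (hF : Measurable F)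
    (hF01 : ∀ x, F x ∈ Icc (0 : ℝ) 1) {s : Set G} (hs : MeasurableSet s) (hμs : μ s ≠ ⊤) (η : G) :
    ∫ x in s, F (x + η) ∂μ ≤ ∫ x in s, F x ∂μ + μ.real ((· + η) '' s \ s) := by
  have hemb := (MeasurableEquiv.addRight η).measurableEmbedding
  have hμs' : μ ((· + η) '' s) ≠ ⊤ := by rwa [image_add_right, measure_preimage_add_right]
  set s' := (· + η) '' s
  have hs' : MeasurableSet s' := hemb.measurableSet_image.2 hs
  have hnorm : ∀ x, ‖F x‖ ≤ 1 := fun x =>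
    abs_le.2 ⟨by linarith [(hF01 x).1], (hF01 x).2⟩
  have hint : ∀ u, μ u ≠ ⊤ → IntegrableOn F u μ := fun u hu =>
    .of_bound hu.lt_top hF.aestronglyMeasurable.restrict 1 (ae_of_all _ hnorm)
  have hμdiff : μ (s' \ s) ≠ ⊤ := measure_ne_top_of_subset sdiff_subset hμs'
  calc ∫ x in s, F (x + η) ∂μ = ∫ y in s', F y ∂μ :=
        ((measurePreserving_add_right μ η).setIntegral_image_emb hemb F s).symm
    _ ≤ ∫ y in s ∪ (s' \ s), F y ∂μ :=
        setIntegral_mono_set (hint _ (measure_union_ne_top hμs hμdiff))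
          (ae_of_all _ fun y => (hF01 y).1) (sdiff_subset_iff.1 subset_rfl).eventuallyLE
    _ = ∫ y in s, F y ∂μ + ∫ y in s' \ s, F y ∂μ :=
        setIntegral_union disjoint_sdiff_right (hs'.diff hs) (hint s hμs) (hint _ hμdiff)
    _ ≤ ∫ y in s, F y ∂μ + μ.real (s' \ s) := by
        gcongr
        refine (le_abs_self _).trans ?_
        simpa using norm_setIntegral_le_of_norm_le_const hμdiff.lt_top fun y _ => hnorm y

theorem setIntegral_cube_comp_add_right_le {n : ℕ} {F : (Fin n → ℝ) → ℝ} (hF : Measurable F)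
    (hF01 : ∀ x, F x ∈ Icc (0 : ℝ) 1) (η : Fin n → ℝ) :
    ∫ ε in univ.pi (fun _ => Icc (-1 : ℝ) 1), F (ε + η) ≤
      (∫ ε in univ.pi (fun _ => Icc (-1 : ℝ) 1), F ε) + 2 ^ n * ((∑ i, |η i|) / 2) := by
  have hcube : univ.pi (fun _ : Fin n => Icc (-1 : ℝ) 1) = Icc (-1) 1 := pi_univ_Icc _ _
  rw [hcube]
  refine (setIntegral_comp_add_right_le hF hF01 measurableSet_Icc
    (by simp [Real.volume_Icc_pi]) η).trans (add_le_add_right ?_ _)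
  rw [image_add_const_Icc, measureReal_def]
  refine ENNReal.toReal_le_of_le_ofReal (by positivity)
    ((Real.volume_pi_Icc_add_diff_Icc_le (fun _ => by norm_num) η).trans_eq
      (congrArg ENNReal.ofReal ?_))
  rcases n with _ | n
  · simp
  · simp only [Pi.one_apply, Pi.neg_apply, sub_neg_eq_add, Finset.prod_const,
      Finset.card_erase_of_mem (Finset.mem_univ _), Finset.card_univ, Fintype.card_fin,
      Nat.add_sub_cancel, ← Finset.sum_mul]
    ring

theorem abs_cube_average_comp_add_right_sub_le {n : ℕ} {F : (Fin n → ℝ) → ℝ}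
    (hF : Measurable F) (hF01 : ∀ x, F x ∈ Icc (0 : ℝ) 1) (η : Fin n → ℝ) :
    |((2 : ℝ) ^ n)⁻¹ * (∫ ε in univ.pi (fun _ => Icc (-1 : ℝ) 1), F (ε + η)) -
      ((2 : ℝ) ^ n)⁻¹ * ∫ ε in univ.pi (fun _ => Icc (-1 : ℝ) 1), F ε| ≤ (∑ i, |η i|) / 2 := by
  have hup := setIntegral_cube_comp_add_right_le hF hF01 η
  have hdown := setIntegral_cube_comp_add_right_le (hF.comp (measurable_add_const η))
    (fun x => hF01 _) (-η)
  simp only [Function.comp_apply, neg_add_cancel_right, Pi.neg_apply, abs_neg] at hdown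
  rw [← mul_sub, abs_mul, abs_of_pos (by positivity), inv_mul_le_iff₀ (by positivity), abs_le]
  constructor <;> linarith

theorem abs_smoothing_add_sub_le {n : ℕ} {lam : Fin n → ℝ} (hlam : ∀ i, lam i ≠ 0)
    {f : (Fin n → ℝ) → ℝ} (hf : Measurable f) (hf01 : ∀ v, f v ∈ Icc (0 : ℝ) 1)
    (x δ : Fin n → ℝ) :
    |((2 : ℝ) ^ n)⁻¹ *
        (∫ ε in univ.pi (fun _ => Icc (-1 : ℝ) 1), f (x + δ + fun j => lam j * ε j)) -
      ((2 : ℝ) ^ n)⁻¹ * ∫ ε in univ.pi (fun _ => Icc (-1 : ℝ) 1), f (x + fun j => lam j * ε j)|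
      ≤ (∑ i, |δ i / lam i|) / 2 := by
  have hshift : ∀ ε : Fin n → ℝ, (x + δ + fun j => lam j * ε j) =
      x + fun j => lam j * (ε + fun i => δ i / lam i) j := fun ε => by
    ext j
    simp only [Pi.add_apply]
    field_simp [hlam j]
    ring
  simp only [hshift]
  have hscale : Measurable fun ε : Fin n → ℝ => x + fun j => lam j * ε j := by fun_prop
  exact abs_cube_average_comp_add_right_sub_le (F := fun ε => f (x + fun j => lam j * ε j))
    (hf.comp hscale) (fun _ => hf01 _) _

theorem uniform_smoothing_cross_polytope_certificate_general (n K : ℕ)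
    (lam : Fin n → ℝ) (hlam : ∀ i, 0 < lam i)
    (f : (Fin n → ℝ) → Fin K → ℝ) (hf : Measurable f)
    (hf01 : ∀ v i, f v i ∈ Set.Icc (0:ℝ) 1)
    (gL : (Fin n → ℝ) → Fin K → ℝ)
    (hgL : ∀ x i, gL x i = ((2 : ℝ) ^ n)⁻¹ *
      ∫ ε in Set.univ.pi (fun _ : Fin n => Set.Icc (-1 : ℝ) 1),
        f (x + fun j => lam j * ε j) i)
    (x : Fin n → ℝ) (cA : Fin K)
    (hne : (Finset.univ.erase cA).Nonempty)
    (δ : Fin n → ℝ)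
    (hδ : ∑ i, |δ i / lam i| ≤
      gL x cA - (Finset.univ.erase cA).sup' hne (fun c => gL x c)) :
    ∀ c, c ≠ cA → gL (x + δ) c ≤ gL (x + δ) cA := by
  intro c hc
  have hstable : ∀ i, |gL (x + δ) i - gL x i| ≤ (∑ j, |δ j / lam j|) / 2 := fun i => by
    simpa only [hgL] using abs_smoothing_add_sub_le (f := fun v => f v i) (fun j => (hlam j).ne')
      ((measurable_pi_apply i).comp hf) (fun v => hf01 v i) x δ
  have hc_le : gL x c ≤ (Finset.univ.erase cA).sup' hne (fun c => gL x c) :=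
    Finset.le_sup' _ (Finset.mem_erase.2 ⟨hc, Finset.mem_univ c⟩)
  linarith [abs_le.1 (hstable c), abs_le.1 (hstable cA)]

/-- generalized cross-polytope certificate for uniform-smoothed
classifiers: the top class `cA` at `x` is preserved for every `δ` with
`‖Λ⁻¹δ‖₁ ≤ g^{cA}(x) − max_{c ≠ cA} g^c(x)`. -/
theorem uniform_smoothing_cross_polytope_certificate (n K : ℕ)
    (lam : Fin n → ℝ) (hlam : ∀ i, 0 < lam i)
    (f : (Fin n → ℝ) → Fin K → ℝ) (hf : Measurable f)
    (hf01 : ∀ v i, f v i ∈ Set.Icc (0:ℝ) 1)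
    (gL : (Fin n → ℝ) → Fin K → ℝ)
    (hgL : ∀ x i, gL x i = ((2 : ℝ) ^ n)⁻¹ *
      ∫ ε in Set.univ.pi (fun _ : Fin n => Set.Icc (-1 : ℝ) 1),
        f (x + fun j => lam j * ε j) i)
    (x : Fin n → ℝ) (cA : Fin K) (hcA : ∀ i, gL x i ≤ gL x cA)
    (hne : (Finset.univ.erase cA).Nonempty)
    (δ : Fin n → ℝ)
    (hδ : ∑ i, |δ i / lam i| ≤
      gL x cA - (Finset.univ.erase cA).sup' hne (fun c => gL x c)) :
    ∀ c, c ≠ cA → gL (x + δ) c ≤ gL (x + δ) cA :=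
  uniform_smoothing_cross_polytope_certificate_general n K lam hlam f hf hf01 gL hgL x cA hne δ hδ
end

section
/- Let Σ ∈ ℝ^{n×n} be positive definite and let f : ℝⁿ → [0,1] be measurable. Define g_Σ(x) = E_{ε ~ N(0,Σ)}[f(x + ε)]. Then g_Σ is √(2/π)-Lipschitz with respect to the norm ‖δ‖_{Σ,2} = √(δᵀΣ⁻¹δ); that is, |g_Σ(x) − g_Σ(y)| ≤ √(2/π) · √((x − y)ᵀΣ⁻¹(x − y)) for all x, y ∈ ℝⁿ. -/
/-!
With `δ = x - y` and `P` the density of `N(0, Σ)`, translation invariance of Lebesgue measure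
gives `g(x) - g(y) = ∫ f(y + w) (P(w - δ) - P(w)) dw`. Since `0 ≤ f ≤ 1` and both densities have
mass one, this is at most half the `L¹` distance `‖P(· - δ) - P‖₁`. That distance is at most `2`,
and by Cauchy–Schwarz against `P` at most the square root of the `χ²`-divergence, which for two
Gaussians with the same covariance is `exp q - 1`, `q = δᵀ Σ⁻¹ δ`. Finally
`min 2 √(exp q - 1) / 2 ≤ √(2q/π)`: for `q ≤ π/2` by convexity of `exp`, otherwise trivially.
-/

open MeasureTheory Matrix

section ChangeOfVariables

variable {ι : Type*} [Fintype ι] [DecidableEq ι] {M : Matrix ι ι ℝ}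

theorem measurableEmbedding_mulVec (hM : M.det ≠ 0) :
    MeasurableEmbedding (M *ᵥ · : (ι → ℝ) → ι → ℝ) := by
  have hdet : IsUnit M.det := isUnit_iff_ne_zero.2 hM
  refine .of_measurable_inverse (g := (M⁻¹ *ᵥ ·))
    (continuous_const.matrix_mulVec continuous_id).measurable ?_
    (continuous_const.matrix_mulVec continuous_id).measurable fun x => ?_
  · rw [mulVec_surjective_iff_isUnit.2 ((isUnit_iff_isUnit_det M).2 hdet) |>.range_eq]
    exact MeasurableSet.univ
  · show M⁻¹ *ᵥ M *ᵥ x = x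
    rw [mulVec_mulVec, nonsing_inv_mul _ hdet, one_mulVec]

theorem map_mulVec_volume (hM : M.det ≠ 0) :
    Measure.map (M *ᵥ ·) volume = ENNReal.ofReal |M.det|⁻¹ • (volume : Measure (ι → ℝ)) := by
  rw [← abs_inv, ← Real.map_matrix_volume_pi_eq_smul_volume_pi hM]
  rfl

theorem integral_comp_mulVec_s8 (hM : M.det ≠ 0) (g : (ι → ℝ) → ℝ) :
    ∫ x, g (M *ᵥ x) = |M.det|⁻¹ * ∫ x, g x := by
  rw [← (measurableEmbedding_mulVec hM).integral_map, map_mulVec_volume hM,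
    integral_smul_measure, ENNReal.toReal_ofReal (by positivity), smul_eq_mul]

theorem integrable_comp_mulVec_iff (hM : M.det ≠ 0) {g : (ι → ℝ) → ℝ} :
    Integrable (fun x => g (M *ᵥ x)) ↔ Integrable g := by
  rw [← Function.comp_def, ← (measurableEmbedding_mulVec hM).integrable_map_iff,
    map_mulVec_volume hM]
  exact integrable_smul_measure (by simpa using hM) ENNReal.ofReal_ne_top

end ChangeOfVariables

section GaussianIntegral

open Real

variable {ι : Type*} [Fintype ι]

theorem exp_neg_dotProduct_self_div_two (u : ι → ℝ) :
    exp (-(u ⬝ᵥ u) / 2) = ∏ i, exp (-(1 / 2) * u i ^ 2) := by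
  rw [← exp_sum, dotProduct, ← Finset.sum_neg_distrib, Finset.sum_div]
  exact congrArg exp (Finset.sum_congr rfl fun i _ => by ring)

theorem integrable_exp_neg_dotProduct_self_div_two :
    Integrable fun u : ι → ℝ => exp (-(u ⬝ᵥ u) / 2) := by
  simp_rw [exp_neg_dotProduct_self_div_two]
  exact Integrable.fintype_prod fun _ => integrable_exp_neg_mul_sq (by norm_num)

theorem integral_exp_neg_dotProduct_self_div_two :
    ∫ u : ι → ℝ, exp (-(u ⬝ᵥ u) / 2) = √(2 * π) ^ Fintype.card ι := by
  simp_rw [exp_neg_dotProduct_self_div_two]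
  rw [volume_pi, integral_fintype_prod_eq_pow (fun x : ℝ => exp (-(1 / 2) * x ^ 2)),
    integral_gaussian]
  congr 2
  ring

variable [DecidableEq ι] {Sig : Matrix ι ι ℝ}

theorem Matrix.PosDef.exists_eq_mul_transpose (hSig : Sig.PosDef) :
    ∃ A : Matrix ι ι ℝ, A.det ≠ 0 ∧ Sig = A * Aᵀ := by
  open scoped MatrixOrder in
  obtain ⟨B, hB⟩ := CStarAlgebra.nonneg_iff_eq_star_mul_self.1 hSig.posSemidef.nonneg
  refine ⟨Bᵀ, fun h => hSig.det_pos.ne' ?_, ?_⟩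
  · rw [hB, det_mul, star_eq_conjTranspose, conjTranspose_eq_transpose_of_trivial, h, zero_mul]
  · rw [hB, star_eq_conjTranspose, conjTranspose_eq_transpose_of_trivial, transpose_transpose]

theorem dotProduct_mulVec_mul_transpose_inv {A : Matrix ι ι ℝ} (hA : A.det ≠ 0) (u : ι → ℝ) :
    A *ᵥ u ⬝ᵥ (A * Aᵀ)⁻¹ *ᵥ A *ᵥ u = u ⬝ᵥ u := by
  have hAu : IsUnit A.det := isUnit_iff_ne_zero.2 hA
  have hAtu : IsUnit Aᵀ.det := by rwa [det_transpose]
  have hcancel : Aᵀ * ((A * Aᵀ)⁻¹ * A) = 1 := by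
    rw [Matrix.mul_inv_rev, Matrix.mul_assoc, nonsing_inv_mul _ hAu, Matrix.mul_one,
      mul_nonsing_inv _ hAtu]
  rw [mulVec_mulVec]
  nth_rewrite 1 [← vecMul_transpose]
  rw [← dotProduct_mulVec, mulVec_mulVec, hcancel, one_mulVec]

theorem integrable_exp_neg_dotProduct_inv_mulVec_div_two (hSig : Sig.PosDef) :
    Integrable fun w : ι → ℝ => exp (-(w ⬝ᵥ Sig⁻¹ *ᵥ w) / 2) := by
  obtain ⟨A, hA, rfl⟩ := hSig.exists_eq_mul_transpose
  rw [← integrable_comp_mulVec_iff hA]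
  simp_rw [dotProduct_mulVec_mul_transpose_inv hA]
  exact integrable_exp_neg_dotProduct_self_div_two

theorem integral_exp_neg_dotProduct_inv_mulVec_div_two (hSig : Sig.PosDef) :
    ∫ w : ι → ℝ, exp (-(w ⬝ᵥ Sig⁻¹ *ᵥ w) / 2) = √((2 * π) ^ Fintype.card ι * Sig.det) := by
  obtain ⟨A, hA, rfl⟩ := hSig.exists_eq_mul_transpose
  have h := integral_comp_mulVec_s8 hA fun w => exp (-(w ⬝ᵥ (A * Aᵀ)⁻¹ *ᵥ w) / 2)
  simp_rw [dotProduct_mulVec_mul_transpose_inv hA, integral_exp_neg_dotProduct_self_div_two] at h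
  have hsq : (2 * π) ^ Fintype.card ι * A.det ^ 2 = (√(2 * π) ^ Fintype.card ι * |A.det|) ^ 2 := by
    rw [mul_pow (√(2 * π) ^ _), sq_abs, ← pow_mul, mul_comm _ 2, pow_mul, sq_sqrt (by positivity)]
  rw [det_mul, det_transpose, ← sq, hsq, sqrt_sq (by positivity), h, mul_comm,
    mul_inv_cancel_left₀ (abs_ne_zero.2 hA)]

end GaussianIntegral

section L1Bounds

variable {α : Type*} [MeasurableSpace α] {μ : Measure α}

theorem abs_integral_mul_sub_integral_mul_le {f p q : α → ℝ} (hf : AEStronglyMeasurable f μ)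
    (hf01 : ∀ᵐ x ∂μ, f x ∈ Set.Icc 0 1) (hp : Integrable p μ) (hq : Integrable q μ)
    (hpq : ∫ x, p x ∂μ = ∫ x, q x ∂μ) :
    |∫ x, f x * p x ∂μ - ∫ x, f x * q x ∂μ| ≤ (∫ x, |p x - q x| ∂μ) / 2 := by
  have hbdd : ∀ᵐ x ∂μ, ‖f x - 1 / 2‖ ≤ 1 / 2 := hf01.mono fun x hx => by
    rw [Real.norm_eq_abs, abs_le]; constructor <;> linarith [hx.1, hx.2]
  have hf1 : ∀ᵐ x ∂μ, ‖f x‖ ≤ 1 := hf01.mono fun x hx => by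
    rw [Real.norm_eq_abs, abs_le]; constructor <;> linarith [hx.1, hx.2]
  have hpq' : Integrable (fun x => p x - q x) μ := hp.sub hq
  have hfpq : Integrable (fun x => f x * p x - f x * q x) μ :=
    (hp.bdd_mul hf hf1).sub (hq.bdd_mul hf hf1)
  -- since `∫ p = ∫ q`, centring `f` at `1/2` does not change the difference
  have hcentre : ∫ x, f x * p x ∂μ - ∫ x, f x * q x ∂μ =
      ∫ x, (f x - 1 / 2) * (p x - q x) ∂μ := by
    have hsplit : ∫ x, (f x - 1 / 2) * (p x - q x) ∂μ =
        ∫ x, f x * p x - f x * q x ∂μ - ∫ x, 1 / 2 * (p x - q x) ∂μ := by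
      rw [← integral_sub hfpq (hpq'.const_mul _)]
      congr 1 with x; ring
    rw [hsplit, integral_const_mul, integral_sub hp hq, hpq, sub_self, mul_zero, sub_zero,
      integral_sub (hp.bdd_mul hf hf1) (hq.bdd_mul hf hf1)]
  rw [hcentre, ← Real.norm_eq_abs, ← integral_div]
  refine norm_integral_le_of_norm_le (hpq'.abs.div_const 2) (hbdd.mono fun x hx => ?_)
  rw [norm_mul, Real.norm_eq_abs (p x - q x)]
  linarith [mul_le_mul_of_nonneg_right hx (abs_nonneg (p x - q x))]

theorem integral_abs_le_sqrt_integral_sq_div_mul_sqrt {p D : α → ℝ} (hp0 : ∀ᵐ x ∂μ, 0 < p x)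
    (hD : AEStronglyMeasurable D μ) (hp : Integrable p μ)
    (hDp : Integrable (fun x => D x ^ 2 / p x) μ) :
    ∫ x, |D x| ∂μ ≤ √(∫ x, D x ^ 2 / p x ∂μ) * √(∫ x, p x ∂μ) := by
  have hsqrt : AEStronglyMeasurable (fun x => √(p x)) μ :=
    hp.aestronglyMeasurable.aemeasurable.sqrt.aestronglyMeasurable
  have hratio : AEStronglyMeasurable (fun x => |D x| / √(p x)) μ :=
    (continuous_abs.comp_aestronglyMeasurable hD).div₀ hsqrt
  have hsq_ratio : (fun x => (|D x| / √(p x)) ^ 2) =ᵐ[μ] fun x => D x ^ 2 / p x :=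
    hp0.mono fun x hx => by
      show (|D x| / √(p x)) ^ 2 = D x ^ 2 / p x
      rw [div_pow, sq_abs, Real.sq_sqrt hx.le]
  have hsq_sqrt : (fun x => √(p x) ^ 2) =ᵐ[μ] p :=
    hp0.mono fun x hx => Real.sq_sqrt hx.le
  have holder := integral_mul_le_Lp_mul_Lq_of_nonneg Real.HolderConjugate.two_two
    (f := fun x => |D x| / √(p x)) (g := fun x => √(p x)) (μ := μ)
    (ae_of_all _ fun x => by positivity) (ae_of_all _ fun x => by positivity)
    (by rw [ENNReal.ofReal_ofNat]
        exact (memLp_two_iff_integrable_sq hratio).2 (hDp.congr hsq_ratio.symm))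
    (by rw [ENNReal.ofReal_ofNat]
        exact (memLp_two_iff_integrable_sq hsqrt).2 (hp.congr hsq_sqrt.symm))
  simp only [Real.rpow_two, ← Real.sqrt_eq_rpow] at holder
  rwa [integral_congr_ae (hp0.mono fun x hx => div_mul_cancel₀ _ (Real.sqrt_pos.2 hx).ne'),
    integral_congr_ae hsq_ratio, integral_congr_ae hsq_sqrt] at holder

end L1Bounds

theorem Matrix.IsSymm.dotProduct_mulVec_comm {ι R : Type*} [Fintype ι] [CommSemiring R]
    {N : Matrix ι ι R} (hN : N.IsSymm) (v w : ι → R) : v ⬝ᵥ N *ᵥ w = w ⬝ᵥ N *ᵥ v := by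
  rw [dotProduct_mulVec, ← mulVec_transpose, hN, dotProduct_comm]

section GaussDensity

open Real

variable {n : ℕ} {Sig : Matrix (Fin n) (Fin n) ℝ}

theorem gaussDensity_pos (hSig : Sig.PosDef) (w : Fin n → ℝ) : 0 < gaussDensity n Sig w := by
  have := hSig.det_pos
  unfold gaussDensity
  positivity

theorem integrable_gaussDensity (hSig : Sig.PosDef) : Integrable (gaussDensity n Sig) :=
  (integrable_exp_neg_dotProduct_inv_mulVec_div_two hSig).const_mul _

theorem integral_gaussDensity (hSig : Sig.PosDef) : ∫ w, gaussDensity n Sig w = 1 := by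
  unfold gaussDensity
  rw [integral_const_mul, integral_exp_neg_dotProduct_inv_mulVec_div_two hSig, Fintype.card_fin,
    inv_mul_cancel₀ (by have := hSig.det_pos; positivity)]

theorem gaussDensity_sub (hSig : Sig.IsSymm) (w δ : Fin n → ℝ) :
    gaussDensity n Sig (w - δ) =
      gaussDensity n Sig w * exp (δ ⬝ᵥ Sig⁻¹ *ᵥ w - δ ⬝ᵥ Sig⁻¹ *ᵥ δ / 2) := by
  have hquad : (w - δ) ⬝ᵥ Sig⁻¹ *ᵥ (w - δ) =
      w ⬝ᵥ Sig⁻¹ *ᵥ w - 2 * (δ ⬝ᵥ Sig⁻¹ *ᵥ w) + δ ⬝ᵥ Sig⁻¹ *ᵥ δ := by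
    rw [mulVec_sub, sub_dotProduct, dotProduct_sub, dotProduct_sub,
      hSig.inv.dotProduct_mulVec_comm w δ]
    ring
  unfold gaussDensity
  rw [hquad, mul_assoc, ← exp_add]
  ring_nf

theorem sq_gaussDensity_sub (hSig : Sig.IsSymm) (w δ : Fin n → ℝ) :
    gaussDensity n Sig (w - δ) ^ 2 =
      exp (δ ⬝ᵥ Sig⁻¹ *ᵥ δ) * gaussDensity n Sig (w - (2 : ℝ) • δ) * gaussDensity n Sig w := by
  rw [gaussDensity_sub hSig w δ, gaussDensity_sub hSig w ((2 : ℝ) • δ)]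
  simp only [smul_dotProduct, mulVec_smul, dotProduct_smul, smul_eq_mul]
  have hexp : exp (δ ⬝ᵥ Sig⁻¹ *ᵥ w - δ ⬝ᵥ Sig⁻¹ *ᵥ δ / 2) ^ 2 = exp (δ ⬝ᵥ Sig⁻¹ *ᵥ δ) *
      exp (2 * (δ ⬝ᵥ Sig⁻¹ *ᵥ w) - 2 * (2 * (δ ⬝ᵥ Sig⁻¹ *ᵥ δ)) / 2) := by
    rw [sq, ← exp_add, ← exp_add]
    ring_nf
  linear_combination gaussDensity n Sig w ^ 2 * hexp

theorem sq_gaussDensity_sub_sub_div (hSig : Sig.PosDef) (w δ : Fin n → ℝ) :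
    (gaussDensity n Sig (w - δ) - gaussDensity n Sig w) ^ 2 / gaussDensity n Sig w =
      exp (δ ⬝ᵥ Sig⁻¹ *ᵥ δ) * gaussDensity n Sig (w - (2 : ℝ) • δ) -
        2 * gaussDensity n Sig (w - δ) + gaussDensity n Sig w := by
  have hSym : Sig.IsSymm := (conjTranspose_eq_transpose_of_trivial Sig).symm.trans hSig.1
  rw [div_eq_iff (gaussDensity_pos hSig w).ne', sub_sq, sq_gaussDensity_sub hSym]
  ring

theorem integrable_sq_gaussDensity_sub_sub_div (hSig : Sig.PosDef) (δ : Fin n → ℝ) :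
    Integrable fun w =>
      (gaussDensity n Sig (w - δ) - gaussDensity n Sig w) ^ 2 / gaussDensity n Sig w := by
  have hP := integrable_gaussDensity hSig
  simp_rw [sq_gaussDensity_sub_sub_div hSig]
  exact (((hP.comp_sub_right _).const_mul _).sub ((hP.comp_sub_right δ).const_mul 2)).add hP

theorem integral_sq_gaussDensity_sub_sub_div (hSig : Sig.PosDef) (δ : Fin n → ℝ) :
    ∫ w, (gaussDensity n Sig (w - δ) - gaussDensity n Sig w) ^ 2 / gaussDensity n Sig w =
      exp (δ ⬝ᵥ Sig⁻¹ *ᵥ δ) - 1 := by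
  simp_rw [sq_gaussDensity_sub_sub_div hSig]
  set P := gaussDensity n Sig
  set c := exp (δ ⬝ᵥ Sig⁻¹ *ᵥ δ)
  have hP : Integrable P := integrable_gaussDensity hSig
  have h2δ : Integrable fun w => c * P (w - (2 : ℝ) • δ) := (hP.comp_sub_right _).const_mul c
  have hδ : Integrable fun w => 2 * P (w - δ) := (hP.comp_sub_right δ).const_mul 2
  have hdiff : Integrable fun w => c * P (w - (2 : ℝ) • δ) - 2 * P (w - δ) := h2δ.sub hδ
  rw [integral_add hdiff hP, integral_sub h2δ hδ, integral_const_mul, integral_const_mul,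
    integral_sub_right_eq_self, integral_sub_right_eq_self, integral_gaussDensity hSig]
  ring

theorem integral_abs_gaussDensity_sub_sub_le (hSig : Sig.PosDef) (δ : Fin n → ℝ) :
    ∫ w, |gaussDensity n Sig (w - δ) - gaussDensity n Sig w| ≤
      min 2 √(exp (δ ⬝ᵥ Sig⁻¹ *ᵥ δ) - 1) := by
  set P := gaussDensity n Sig
  have hPpos : ∀ w, 0 < P w := gaussDensity_pos hSig
  have hP : Integrable P := integrable_gaussDensity hSig
  have hPδ : Integrable fun w => P (w - δ) := hP.comp_sub_right δ
  have hPδP : Integrable fun w => P (w - δ) - P w := hPδ.sub hP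
  refine le_min ?_ ?_
  · calc ∫ w, |P (w - δ) - P w| ≤ ∫ w, (P (w - δ) + P w) :=
          integral_mono hPδP.abs (hPδ.add hP) fun w => by
            simpa only [abs_of_pos (hPpos _)] using abs_sub (P (w - δ)) (P w)
      _ = 2 := by
          rw [integral_add hPδ hP, integral_sub_right_eq_self, integral_gaussDensity hSig]
          norm_num
  · have h := integral_abs_le_sqrt_integral_sq_div_mul_sqrt (ae_of_all _ hPpos)
      hPδP.aestronglyMeasurable hP (integrable_sq_gaussDensity_sub_sub_div hSig δ)
    rwa [integral_sq_gaussDensity_sub_sub_div hSig δ, integral_gaussDensity hSig, sqrt_one,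
      mul_one] at h

end GaussDensity

section ExpBounds

open Real

theorem exp_pi_div_two_le_five : exp (π / 2) ≤ 5 := by
  have hexp_pi : exp π ≤ 25 := calc
    exp π ≤ exp (3 + 0.15) := exp_le_exp.2 (by linarith [pi_lt_d2])
    _ = exp 1 ^ 3 * exp 0.15 := by rw [exp_add, ← exp_nat_mul]; norm_num
    _ ≤ 2.7182818286 ^ 3 * (1 / (1 - 0.15)) := by
        gcongr
        · exact exp_one_lt_d9.le
        · exact (exp_bound_div_one_sub_of_interval' (by norm_num) (by norm_num)).le
    _ ≤ 25 := by norm_num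
  have hsq : exp (π / 2) ^ 2 = exp π := by rw [← exp_nat_mul]; ring_nf
  exact (pow_le_pow_iff_left₀ (exp_pos _).le (by norm_num) two_ne_zero).1 (by linarith)

/-- On `[0, π/2]`, `exp` lies below its chord, whose slope `(exp (π/2) - 1) / (π/2)` is at most
`8 / π`. -/
theorem exp_sub_one_le_of_le_pi_div_two {q : ℝ} (hq0 : 0 ≤ q) (hq : q ≤ π / 2) :
    exp q - 1 ≤ 8 / π * q := by
  have hπ := pi_pos
  set t := q / (π / 2)
  have ht0 : 0 ≤ t := by positivity
  have ht1 : t ≤ 1 := div_le_one_of_le₀ hq (by positivity)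
  have hchord := convexOn_exp.2 (Set.mem_univ 0) (Set.mem_univ (π / 2)) (sub_nonneg.2 ht1) ht0
    (sub_add_cancel 1 t)
  have hq_eq : (1 - t) • (0 : ℝ) + t • (π / 2) = q := by
    simp only [smul_eq_mul, mul_zero, zero_add, t]
    field_simp
  rw [hq_eq, smul_eq_mul, smul_eq_mul, exp_zero, mul_one] at hchord
  have h8 : 8 / π * q = 4 * t := by simp only [t]; field_simp; ring
  nlinarith [exp_pi_div_two_le_five]

theorem min_two_sqrt_exp_sub_one_div_two_le {q : ℝ} (hq : 0 ≤ q) :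
    min 2 √(exp q - 1) / 2 ≤ √(2 / π) * √q := by
  have hπ := pi_pos
  have hsqrt : √(2 / π) * √q = √(8 / π * q) / 2 := by
    rw [show 8 / π * q = 2 ^ 2 * (2 / π * q) by ring, sqrt_mul (by norm_num),
      sqrt_sq (by norm_num), sqrt_mul (by positivity)]
    ring
  rw [hsqrt]
  gcongr
  rcases le_total q (π / 2) with hsmall | hlarge
  · exact (min_le_right _ _).trans (sqrt_le_sqrt (exp_sub_one_le_of_le_pi_div_two hq hsmall))
  · refine (min_le_left _ _).trans ?_
    rw [show (2 : ℝ) = √(2 ^ 2) by rw [sqrt_sq (by norm_num)]]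
    apply sqrt_le_sqrt
    rw [div_mul_eq_mul_div, le_div_iff₀ hπ]
    linarith

end ExpBounds

/-- the Gaussian-smoothed function `g_Σ` is `√(2/π)`-Lipschitz
w.r.t. the norm `‖δ‖_{Σ,2} = √(δᵀΣ⁻¹δ)`. -/
theorem gaussian_smoothing_sqrt_two_div_pi_lipschitz (n : ℕ)
    (Sig : Matrix (Fin n) (Fin n) ℝ) (hSig : Sig.PosDef)
    (f : (Fin n → ℝ) → ℝ) (hf : Measurable f) (hf01 : ∀ v, f v ∈ Set.Icc (0:ℝ) 1)
    (gS : (Fin n → ℝ) → ℝ)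
    (hgS : ∀ x, gS x = ∫ ε, f (x + ε) * gaussDensity n Sig ε) :
    ∀ x y, |gS x - gS y| ≤
      Real.sqrt (2 / Real.pi) * Real.sqrt ((x - y) ⬝ᵥ (Sig⁻¹ *ᵥ (x - y))) := by
  intro x y
  have hP := integrable_gaussDensity hSig
  have hgS_x : gS x = ∫ w, f (y + w) * gaussDensity n Sig (w - (x - y)) := by
    rw [hgS, ← integral_sub_right_eq_self _ (x - y)]
    simp_rw [show ∀ w, x + (w - (x - y)) = y + w from fun w => by abel]
  have hq : 0 ≤ (x - y) ⬝ᵥ Sig⁻¹ *ᵥ (x - y) := by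
    simpa using hSig.inv.posSemidef.dotProduct_mulVec_nonneg (x - y)
  calc |gS x - gS y|
      ≤ (∫ w, |gaussDensity n Sig (w - (x - y)) - gaussDensity n Sig w|) / 2 := by
        rw [hgS_x, hgS y]
        exact abs_integral_mul_sub_integral_mul_le
          (hf.comp (measurable_const_add y)).aestronglyMeasurable (ae_of_all _ fun _ => hf01 _)
          (hP.comp_sub_right _) hP (integral_sub_right_eq_self _ _)
    _ ≤ min 2 √(Real.exp ((x - y) ⬝ᵥ Sig⁻¹ *ᵥ (x - y)) - 1) / 2 := by
        gcongr
        exact integral_abs_gaussDensity_sub_sub_le hSig (x - y)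
    _ ≤ _ := min_two_sqrt_exp_sub_one_div_two_le hq
end
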